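/- arXiv:1401.6033 — 2 statements merged into one kernel-verified Lean document; each statement's English description precedes it below -/
import Mathlib

section
/- Let a, M be positive integers, let I_g, I_h ⊂ ℤ be finite integer intervals of lengths L_g and L_h with I_g ∩ I_h ≠ ∅, and let g, h ∈ ℓ²(ℤ) with supp(g) ⊆ I_g, supp(h) ⊆ I_h. Let L be a positive integer with L > L_g + L_h, a | L and M | L, and let g_fin, h_fin ∈ ℂ^L be the periodizations of g and h. Then for every m = 0,…,a−1 and every n ∈ ℤ with I_h ∩ (I_g + nM) ≠ ∅, one has ⟨h_fin, (e^{2πim·/a}) · T_{nM} g_fin⟩_{ℂ^L} = ⟨h, M_{m/a} T_{nM} g⟩_{ℓ²(ℤ)}, where the translation on ℂ^L is circular (modulo L). -/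
/-- Periodization of a (finitely supported) sequence `g : ℤ → ℂ` onto `ℂ^L`,
identified with functions on `ZMod L`: `g_fin[l] = ∑_{k ∈ ℤ} g[l - kL]`. -/
noncomputable def periodize (L : ℕ) [NeZero L] (g : ℤ → ℂ) : ZMod L → ℂ :=
  fun l => ∑' k : ℤ, g ((l.val : ℤ) - k * (L : ℤ))

/-! Periodization turns the sum over `ZMod L` into a sum over the support of `h`, each `j` being
sent to its residue class. Since `a ∣ L`, the modulation only depends on that class. And since
`Lg + Lh < L`, the differences `j - nM - i` with `j ∈ I_h`, `i ∈ I_g` all lie strictly between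
`-L` and `L`, so the periodization of `g` at the class of `j - nM` is just `g (j - nM)`. -/

open Complex Finset Function

lemma Int.ModEq.eq_of_abs_lt {m a b : ℤ} (h : a ≡ b [ZMOD m]) (h2 : |b - a| < m) : a = b :=
  (sub_eq_zero.mp (Int.eq_zero_of_abs_lt_dvd h.dvd h2)).symm

lemma exp_two_pi_I_mul_div_congr {a : ℕ} (m : ℤ) {j k : ℤ} (h : j ≡ k [ZMOD a]) :
    exp (2 * Real.pi * I * m * j / a) = exp (2 * Real.pi * I * m * k / a) := by
  rcases eq_or_ne a 0 with rfl | ha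
  · simp
  obtain ⟨c, hc⟩ := Int.modEq_iff_dvd.mp h.symm
  have hj : (j : ℂ) = k + a * c := by exact_mod_cast (by omega : j = k + a * c)
  rw [exp_eq_exp_iff_exists_int]
  refine ⟨m * c, ?_⟩
  rw [hj]
  push_cast
  field_simp

lemma periodize_eq_sum_filter {L : ℕ} [NeZero L] {g : ℤ → ℂ} {s : Finset ℤ}
    (hg : support g ⊆ s) (x : ZMod L) :
    periodize L g x = ∑ j ∈ s with ((j : ℤ) : ZMod L) = x, g j := by
  set G : ℤ → ℂ := fun j => if (j : ZMod L) = x then g j else 0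
  have hshift : Injective fun k : ℤ => (x.val : ℤ) - k * L := by
    intro k k' hkk'
    simpa [NeZero.ne L] using hkk'
  have hG : ∀ k : ℤ, G ((x.val : ℤ) - k * L) = g ((x.val : ℤ) - k * L) := fun k => by
    simp [G, ZMod.natCast_val]
  have hGsupp : support G ⊆ Set.range fun k : ℤ => (x.val : ℤ) - k * L := by
    intro j hj
    have hjx : (j : ZMod L) = x := by by_contra hne; simp [G, hne] at hj
    obtain ⟨c, hc⟩ := (ZMod.intCast_eq_intCast_iff_dvd_sub j x.val L).mp (by simpa using hjx)
    exact ⟨c, by simp only; linarith⟩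
  calc periodize L g x = ∑' k : ℤ, G ((x.val : ℤ) - k * L) := by simp only [hG]; rfl
    _ = ∑' j, G j := hshift.tsum_eq hGsupp
    _ = ∑ j ∈ s, G j := tsum_eq_sum fun j hj => by simp [G, notMem_support.mp fun h => hj (hg h)]
    _ = _ := (sum_filter ..).symm

lemma sum_periodize_mul {L : ℕ} [NeZero L] {h : ℤ → ℂ} {s : Finset ℤ}
    (hh : support h ⊆ s) (F : ZMod L → ℂ) :
    ∑ x : ZMod L, periodize L h x * F x = ∑ j ∈ s, h j * F j := by
  simp_rw [periodize_eq_sum_filter hh, sum_mul]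
  rw [← sum_fiberwise s (fun j : ℤ => (j : ZMod L)) fun j => h j * F j]
  refine sum_congr rfl fun x _ => sum_congr rfl fun j hj => ?_
  rw [(mem_filter.mp hj).2]

lemma periodize_intCast_eq {L : ℕ} [NeZero L] {g : ℤ → ℂ} {s : Finset ℤ}
    (hg : support g ⊆ s) {k : ℤ} (hk : ∀ i ∈ s, i ≡ k [ZMOD L] → i = k) :
    periodize L g k = g k := by
  rw [periodize_eq_sum_filter hg]
  refine sum_eq_single k (fun i hi hik => ?_) fun hk' => ?_
  · simp only [mem_filter, ZMod.intCast_eq_intCast_iff] at hi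
    exact absurd (hk i hi.1 hi.2) hik
  · by_contra hgk
    exact hk' (mem_filter.mpr ⟨hg hgk, rfl⟩)

theorem periodized_wexler_raz_inner_eq_general
    (a M L : ℕ) [NeZero L]
    (haL : a ∣ L)
    (ag bg ah bh : ℤ) (Lg Lh : ℕ)
    (hLg : (Finset.Icc ag bg).card = Lg) (hLh : (Finset.Icc ah bh).card = Lh)
    (hL : Lg + Lh < L)
    (g h : ℤ → ℂ)
    (hgsupp : ∀ l : ℤ, g l ≠ 0 → l ∈ Finset.Icc ag bg)
    (hhsupp : ∀ l : ℤ, h l ≠ 0 → l ∈ Finset.Icc ah bh)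
    (m : ℕ) (n : ℤ)
    (hn : ((Finset.Icc ah bh) ∩
      (Finset.Icc ag bg).image (fun i => i + n * (M : ℤ))).Nonempty) :
    ∑ l : ZMod L, periodize L h l *
        star (Complex.exp (2 * Real.pi * Complex.I * (m : ℂ) * (l.val : ℂ) / (a : ℂ)) *
          periodize L g (l - ((n * (M : ℤ) : ℤ) : ZMod L))) =
      ∑' l : ℤ, h l * star (g (l - n * (M : ℤ)) *
        Complex.exp (2 * Real.pi * Complex.I * (m : ℂ) * (l : ℂ) / (a : ℂ))) := by
  obtain ⟨c, hc⟩ := hn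
  simp only [mem_inter, mem_image, mem_Icc] at hc
  obtain ⟨hc, i₀, hi₀, rfl⟩ := hc
  rw [Int.card_Icc] at hLg hLh
  have hwindow : ∀ j ∈ Icc ah bh, ∀ i ∈ Icc ag bg, i ≡ j - n * M [ZMOD L] → i = j - n * M := by
    intro j hj i hi hji
    -- `|j - nM - i| ≤ |j - (i₀ + nM)| + |i₀ - i| ≤ (Lh - 1) + (Lg - 1)`
    refine hji.eq_of_abs_lt (abs_lt.mpr ?_)
    simp only [mem_Icc] at hj hi
    constructor <;> omega
  rw [sum_periodize_mul hhsupp, tsum_eq_sum' ((support_mul_subset_left _ _).trans hhsupp)]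
  refine sum_congr rfl fun j hj => ?_
  have hval : ((j : ZMod L).val : ℤ) ≡ j [ZMOD a] := by
    rw [ZMod.val_intCast]
    exact (Int.mod_modEq j L).of_dvd (Int.natCast_dvd_natCast.mpr haL)
  have hexp := exp_two_pi_I_mul_div_congr m hval
  push_cast at hexp
  rw [← Int.cast_sub, periodize_intCast_eq hgsupp (hwindow j hj), hexp, mul_comm (exp _)]

/-- for `g`, `h` supported in finite integer intervals `I_g`, `I_h` of
lengths `Lg`, `Lh` with nonempty intersection, `L > Lg + Lh` divisible by `a` and `M`,
for every `m = 0,…,a-1` and every `n ∈ ℤ` with `I_h ∩ (I_g + nM) ≠ ∅`, the finite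
inner product `⟨h_fin, e^{2πim·/a}·T_{nM} g_fin⟩_{ℂ^L}` (circular translation) equals
the `ℓ²(ℤ)` inner product `⟨h, M_{m/a} T_{nM} g⟩`. -/
theorem periodized_wexler_raz_inner_eq
    (a M L : ℕ) (ha : 0 < a) (hM : 0 < M) [NeZero L]
    (haL : a ∣ L) (hML : M ∣ L)
    (ag bg ah bh : ℤ) (Lg Lh : ℕ)
    (hLg : (Finset.Icc ag bg).card = Lg) (hLh : (Finset.Icc ah bh).card = Lh)
    (hinter : ((Finset.Icc ag bg) ∩ (Finset.Icc ah bh)).Nonempty)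
    (hL : Lg + Lh < L)
    (g h : ℤ → ℂ)
    (hgsupp : ∀ l : ℤ, g l ≠ 0 → l ∈ Finset.Icc ag bg)
    (hhsupp : ∀ l : ℤ, h l ≠ 0 → l ∈ Finset.Icc ah bh)
    (m : ℕ) (hm : m < a) (n : ℤ)
    (hn : ((Finset.Icc ah bh) ∩
      (Finset.Icc ag bg).image (fun i => i + n * (M : ℤ))).Nonempty) :
    ∑ l : ZMod L, periodize L h l *
        star (Complex.exp (2 * Real.pi * Complex.I * (m : ℂ) * (l.val : ℂ) / (a : ℂ)) *
          periodize L g (l - ((n * (M : ℤ) : ℤ) : ZMod L))) =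
      ∑' l : ℤ, h l * star (g (l - n * (M : ℤ)) *
        Complex.exp (2 * Real.pi * Complex.I * (m : ℂ) * (l : ℂ) / (a : ℂ))) :=
  periodized_wexler_raz_inner_eq_general a M L haL ag bg ah bh Lg Lh hLg hLh hL g h hgsupp hhsupp m
    n hn
end

section
/- Let a, M be positive integers and let g, h ∈ ℓ²(ℤ) be supported in finite integer intervals I_g, I_h of lengths L_g and L_h, both centered at 0, with I_g ∩ I_h ≠ ∅. Let L be a positive integer with L ≥ L_g, L ≥ L_h, a | L and M | L, and let g_fin, h_fin ∈ ℂ^L be the periodizations of g and h. If g and h satisfy the Wexler–Raz equations on ℓ²(ℤ) for parameters a, M, then g_fin and h_fin satisfy the Wexler–Raz equations on ℂ^L for parameters a, M. -/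
/-- The Wexler–Raz equations on `ℓ²(ℤ)` for the pair `(g, h)` and parameters `a, M`:
`(M/a)·⟨h, M_{m/a} T_{nM} g⟩ = δ[n]δ[m]` for all `m = 0,…,a-1` and `n ∈ ℤ`. -/
noncomputable def WexlerRazZ (a M : ℕ) (g h : ℤ → ℂ) : Prop :=
  ∀ m : ℕ, m < a → ∀ n : ℤ,
    (M : ℂ) / (a : ℂ) *
      ∑' l : ℤ, h l * star (g (l - n * (M : ℤ)) *
        Complex.exp (2 * Real.pi * Complex.I * (m : ℂ) * (l : ℂ) / (a : ℂ))) =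
      if n = 0 ∧ m = 0 then 1 else 0

/-- The Wexler–Raz equations on `ℂ^L` for the pair `(g, h)` and parameters `a, M`
(with `a ∣ L`, `M ∣ L`), using circular translation:
`(M/a)·⟨h, e^{2πim·/a}·T_{nM} g⟩_{ℂ^L} = δ[n]δ[m]` for `m = 0,…,a-1`, `n = 0,…,L/M-1`. -/
noncomputable def WexlerRazFin (L a M : ℕ) [NeZero L] (g h : ZMod L → ℂ) : Prop :=
  ∀ m : ℕ, m < a → ∀ n : ℕ, n < L / M →
    (M : ℂ) / (a : ℂ) *
      ∑ l : ZMod L, h l *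
        star (Complex.exp (2 * Real.pi * Complex.I * (m : ℂ) * (l.val : ℂ) / (a : ℂ)) *
          g (l - ((n * M : ℕ) : ZMod L))) =
      if n = 0 ∧ m = 0 then 1 else 0

/-!
Because `a ∣ L`, the modulation `l ↦ e^{2πiml/a}` is `L`-periodic, so writing every integer
uniquely as `x.val - kL` with `x : ZMod L` turns the inner product on `ℂ^L` into
`∑_j ⟨h, M_{m/a} T_{nM + jL} g⟩_{ℓ²(ℤ)}`, all sums being finite by the support assumptions.
Since `M ∣ L`, `nM + jL = (n + jL/M)M`, and for `0 ≤ n < L/M` the Wexler–Raz equations on `ℤ`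
make every term vanish except `j = 0`, which gives `δ[n]δ[m]`.
-/

open Function

noncomputable def modulationFactor (a m : ℕ) (l : ℤ) : ℂ :=
  Complex.exp (2 * Real.pi * Complex.I * (m : ℂ) * (l : ℂ) / (a : ℂ))

lemma modulationFactor_periodic {a : ℕ} (m : ℕ) {p : ℤ} (hp : (a : ℤ) ∣ p) :
    Periodic (modulationFactor a m) p := by
  obtain ⟨c, rfl⟩ := hp
  intro l
  rcases eq_or_ne a 0 with rfl | ha
  · simp
  have hexponent : 2 * (Real.pi : ℂ) * Complex.I * m * ((l + a * c : ℤ) : ℂ) / a =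
      2 * Real.pi * Complex.I * m * (l : ℂ) / a + (m * c : ℤ) * (2 * Real.pi * Complex.I) := by
    push_cast
    field_simp
  rw [modulationFactor, modulationFactor, hexponent, Complex.exp_add, Complex.exp_int_mul_two_pi_mul_I,
    mul_one]

section Periodize

variable {L : ℕ} [NeZero L]

variable (L) in
def zmodProdIntEquiv : ZMod L × ℤ ≃ ℤ where
  toFun p := p.1.val - p.2 * L
  invFun l := (l, -(l / L))
  left_inv := by
    rintro ⟨x, k⟩
    have hL : (L : ℤ) ≠ 0 := Int.natCast_ne_zero.mpr (NeZero.ne L)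
    have hdiv : ((x.val : ℤ) - k * L) / L = -k := by
      rw [sub_eq_add_neg, ← neg_mul, Int.add_mul_ediv_right _ _ hL,
        Int.ediv_eq_zero_of_lt (by positivity) (by exact_mod_cast x.val_lt), zero_add]
    refine Prod.ext ?_ ?_
    · simp
    · exact neg_eq_iff_eq_neg.mpr hdiv
  right_inv l := by
    simp only [ZMod.val_intCast, neg_mul, sub_neg_eq_add]
    exact Int.emod_add_ediv_mul l L

lemma periodize_intCast (g : ℤ → ℂ) (t : ℤ) :
    periodize L g t = ∑' k : ℤ, g (t - k * L) := by
  have hval : ((t : ZMod L).val : ℤ) = t - (t / L) * L := by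
    rw [ZMod.val_intCast, Int.emod_def, mul_comm]
  rw [periodize, hval, ← (Equiv.addRight (t / L)).tsum_eq fun k => g (t - k * L)]
  congr 1 with k
  simp only [Equiv.coe_addRight]
  ring_nf

lemma periodize_mul_periodic (h ψ : ℤ → ℂ) (hψ : Periodic ψ L) (x : ZMod L) :
    periodize L (fun l => h l * ψ l) x = periodize L h x * ψ x.val := by
  rw [periodize, periodize, ← tsum_mul_right]
  congr 1 with k
  have hk := hψ.sub_int_mul_eq (x := (x.val : ℤ)) k
  rw [Int.cast_id] at hk
  rw [hk]

lemma sum_periodize {F : ℤ → ℂ} (hF : HasFiniteSupport F) :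
    ∑ x : ZMod L, periodize L F x = ∑' l, F l := by
  have hsummable : Summable fun p => F (zmodProdIntEquiv L p) :=
    summable_of_hasFiniteSupport (hF.fun_comp_of_injective (zmodProdIntEquiv L).injective)
  rw [← (zmodProdIntEquiv L).tsum_eq, hsummable.tsum_prod, tsum_fintype]
  rfl

lemma sum_periodize_mul_star {a : ℕ} (haL : a ∣ L) (m : ℕ) {g h : ℤ → ℂ}
    (hg : HasFiniteSupport g) (hh : HasFiniteSupport h) (s : ℤ) :
    ∑ x : ZMod L, periodize L h x * star (modulationFactor a m x.val * periodize L g (x - s)) =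
      ∑' j : ℤ, ∑' l : ℤ, h l * star (g (l - (s + j * L)) * modulationFactor a m l) := by
  let ψ : ℤ → ℂ := fun l => star (modulationFactor a m l * periodize L g ((l : ZMod L) - s))
  have hψ_periodic : Periodic ψ L := by
    intro l
    simp only [ψ, modulationFactor_periodic m (Int.natCast_dvd_natCast.mpr haL) l]
    push_cast
    simp
  have hψ_tsum (l : ℤ) : ψ l = ∑' j : ℤ, star (g (l - (s + j * L)) * modulationFactor a m l) := by
    have hcast : ψ l = star (modulationFactor a m l * periodize L g ((l - s : ℤ) : ZMod L)) := by
      simp [ψ]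
    rw [hcast, periodize_intCast, mul_comm (modulationFactor a m l), ← tsum_mul_right, tsum_star]
    simp only [sub_sub]
  have hsupp : HasFiniteSupport
      (uncurry fun l j : ℤ => h l * star (g (l - (s + j * L)) * modulationFactor a m l)) := by
    have hinj : Injective fun p : ℤ × ℤ => (p.1, p.1 - (s + p.2 * L)) := by
      rintro ⟨l, j⟩ ⟨l', j'⟩ hp
      simp only [Prod.mk.injEq] at hp ⊢
      obtain ⟨rfl, hp⟩ := hp
      exact ⟨rfl, mul_right_cancel₀ (Int.natCast_ne_zero.mpr (NeZero.ne L)) (by linarith)⟩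
    refine ((hh.prod hg).preimage hinj.injOn).subset fun p hp => ?_
    simp only [mem_support, uncurry, star_mul', ne_eq, mul_eq_zero, star_eq_zero, not_or] at hp
    exact ⟨hp.1, hp.2.1⟩
  calc ∑ x : ZMod L, periodize L h x * star (modulationFactor a m x.val * periodize L g (x - s))
      = ∑ x : ZMod L, periodize L (fun l => h l * ψ l) x := by
        congr 1 with x
        rw [periodize_mul_periodic _ _ hψ_periodic]
        simp [ψ]
    _ = ∑' l, h l * ψ l := sum_periodize (hh.fun_mul_left ψ)
    _ = ∑' j : ℤ, ∑' l : ℤ, h l * star (g (l - (s + j * L)) * modulationFactor a m l) := by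
        simp_rw [hψ_tsum, ← tsum_mul_left]
        exact ((summable_of_hasFiniteSupport hsupp).tsum_comm).symm

end Periodize

lemma add_mul_eq_zero_iff_of_lt {n D j : ℤ} (hn : 0 ≤ n) (hnD : n < D) :
    n + j * D = 0 ↔ j = 0 ∧ n = 0 := by
  constructor
  · intro h
    rcases lt_trichotomy j 0 with hj | hj | hj
    · nlinarith
    · subst hj; simpa using h
    · nlinarith
  · rintro ⟨rfl, rfl⟩
    simp

theorem wexler_raz_periodized_of_centered_general
    (a M L : ℕ) [NeZero L]
    (haL : a ∣ L) (hML : M ∣ L)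
    (ag bg ah bh : ℤ)
    (g h : ℤ → ℂ)
    (hgsupp : ∀ l : ℤ, g l ≠ 0 → l ∈ Finset.Icc ag bg)
    (hhsupp : ∀ l : ℤ, h l ≠ 0 → l ∈ Finset.Icc ah bh)
    (hWR : WexlerRazZ a M g h) :
    WexlerRazFin L a M (periodize L g) (periodize L h) := by
  intro m hm n hn
  have hg : HasFiniteSupport g := (Finset.Icc ag bg).finite_toSet.subset fun l hl => hgsupp l hl
  have hh : HasFiniteSupport h := (Finset.Icc ah bh).finite_toSet.subset fun l hl => hhsupp l hl
  have hL : (L : ℤ) = (L / M : ℕ) * M := by exact_mod_cast (Nat.div_mul_cancel hML).symm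
  have hterm (j : ℤ) :
      (M : ℂ) / a * ∑' l : ℤ, h l * star (g (l - ((n * M : ℕ) + j * L)) * modulationFactor a m l) =
        if j = 0 then (if n = 0 ∧ m = 0 then 1 else 0) else 0 := by
    have hshift : ((n * M : ℕ) : ℤ) + j * L = (n + j * (L / M : ℕ)) * M := by
      rw [hL]; push_cast; ring
    rw [hshift]
    refine (hWR m hm _).trans ?_
    have hnD : (n : ℤ) < (L / M : ℕ) := by exact_mod_cast hn
    simp only [add_mul_eq_zero_iff_of_lt (Int.natCast_nonneg n) hnD]
    by_cases hj : j = 0 <;> simp [hj]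
  have hsum := sum_periodize_mul_star haL m hg hh (n * M : ℕ)
  simp only [modulationFactor, Int.cast_natCast] at hsum hterm
  rw [hsum, ← tsum_mul_left, tsum_congr hterm, tsum_ite_eq]

/-- for `g`, `h` supported in finite integer intervals of lengths `Lg`, `Lh`,
both centered at `0` (i.e. of the form `Icc (-b) b` or `Icc (-b-1) b`), with nonempty
intersection, and `L ≥ Lg`, `L ≥ Lh` divisible by `a` and `M`, if `(g, h)` satisfies the
Wexler–Raz equations on `ℓ²(ℤ)` then the periodized pair `(g_fin, h_fin)` satisfies the
Wexler–Raz equations on `ℂ^L`. -/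
theorem wexler_raz_periodized_of_centered
    (a M L : ℕ) (ha : 0 < a) (hM : 0 < M) [NeZero L]
    (haL : a ∣ L) (hML : M ∣ L)
    (ag bg ah bh : ℤ) (Lg Lh : ℕ)
    (hLg : (Finset.Icc ag bg).card = Lg) (hLh : (Finset.Icc ah bh).card = Lh)
    (hgcent : ag = -bg ∨ ag = -bg - 1) (hhcent : ah = -bh ∨ ah = -bh - 1)
    (hinter : ((Finset.Icc ag bg) ∩ (Finset.Icc ah bh)).Nonempty)
    (hLLg : Lg ≤ L) (hLLh : Lh ≤ L)
    (g h : ℤ → ℂ)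
    (hgsupp : ∀ l : ℤ, g l ≠ 0 → l ∈ Finset.Icc ag bg)
    (hhsupp : ∀ l : ℤ, h l ≠ 0 → l ∈ Finset.Icc ah bh)
    (hWR : WexlerRazZ a M g h) :
    WexlerRazFin L a M (periodize L g) (periodize L h) :=
  wexler_raz_periodized_of_centered_general a M L haL hML ag bg ah bh g h hgsupp hhsupp hWR
end
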